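/- Let p be a prime and let R and T be isomorphic transitive subgroups of Sym(X), for X a finite set, such that R has a normal semiregular p-subgroup R_p ⊴ R and T has a normal semiregular p-subgroup T_p ⊴ T. Suppose that G = ⟨R, T⟩ has a block system 𝓑 such that R_p ≤ fix_G(𝓑) and T_p ≤ fix_G(𝓑), and such that for every block B ∈ 𝓑 the induced groups (R_p)^B and (T_p)^B each have the same orbits on B as a Sylow p-subgroup of fix_G(𝓑)^B. Then there exists δ ∈ G such that the set of orbits of R_p on X equals the set of orbits of δ⁻¹T_pδ on X, and this partition 𝓒 is a normal block system of ⟨R, δ⁻¹Tδ⟩ whose blocks have size |R_p|. -/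

import Mathlib

open Equiv Pointwise

section PermGroupDefs

variable {Y : Type*}

/-- A subgroup of `Equiv.Perm Y` is transitive if it acts transitively on `Y`. -/
def SubTrans (G : Subgroup (Equiv.Perm Y)) : Prop :=
  ∀ x y : Y, ∃ g ∈ G, g x = y

/-- A subgroup of `Equiv.Perm Y` is semiregular if only its identity fixes a point. -/
def SubSemiregular (H : Subgroup (Equiv.Perm Y)) : Prop :=
  ∀ h ∈ H, (∃ x : Y, h x = x) → h = 1

/-- A subgroup of `Equiv.Perm Y` is regular if it is transitive and semiregular. -/
def SubRegular (H : Subgroup (Equiv.Perm Y)) : Prop :=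
  SubTrans H ∧ SubSemiregular H

/-- Two-transitivity. -/
def Sub2Trans (G : Subgroup (Equiv.Perm Y)) : Prop :=
  ∀ x₁ x₂ y₁ y₂ : Y, x₁ ≠ x₂ → y₁ ≠ y₂ → ∃ g ∈ G, g x₁ = y₁ ∧ g x₂ = y₂

/-- Orbit of a point under a subgroup of `Equiv.Perm Y`. -/
def SubOrbit (H : Subgroup (Equiv.Perm Y)) (x : Y) : Set Y :=
  {y | ∃ h ∈ H, h x = y}

/-- The set of orbits of a subgroup of `Equiv.Perm Y`. -/
def SubOrbits (H : Subgroup (Equiv.Perm Y)) : Set (Set Y) :=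
  Set.range (SubOrbit H)

/-- A block for a subgroup of `Equiv.Perm Y`. -/
def SubIsBlock (G : Subgroup (Equiv.Perm Y)) (B : Set Y) : Prop :=
  ∀ g ∈ G, (g : Equiv.Perm Y) '' B = B ∨ Disjoint ((g : Equiv.Perm Y) '' B) B

/-- Primitivity: transitive and the only blocks are trivial. -/
def SubPrimitive (G : Subgroup (Equiv.Perm Y)) : Prop :=
  SubTrans G ∧ ∀ B : Set Y, B.Nonempty → SubIsBlock G B → B = Set.univ ∨ ∃ x, B = {x}

/-- A block system: a `G`-invariant partition of `Y`. -/
def IsBlockSystem (G : Subgroup (Equiv.Perm Y)) (P : Set (Set Y)) : Prop :=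
  (∀ B ∈ P, B.Nonempty) ∧ (∀ x : Y, ∃! B : Set Y, B ∈ P ∧ x ∈ B) ∧
    (∀ g ∈ G, ∀ B ∈ P, (g : Equiv.Perm Y) '' B ∈ P)

/-- A normal block system: the set of orbits of a normal subgroup. -/
def IsNormalBlockSystem (G : Subgroup (Equiv.Perm Y)) (P : Set (Set Y)) : Prop :=
  IsBlockSystem G P ∧
    ∃ N : Subgroup (Equiv.Perm Y), N ≤ G ∧ (∀ g ∈ G, ∀ x ∈ N, g * x * g⁻¹ ∈ N) ∧
      P = SubOrbits N

/-- `P` refines `Q`: every block of `P` is contained in a block of `Q`. -/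
def Refines (P Q : Set (Set Y)) : Prop :=
  ∀ B ∈ P, ∃ C ∈ Q, B ⊆ C

/-- The partition of `Y` into singletons. -/
def SingletonPartition (Y : Type*) : Set (Set Y) :=
  Set.range fun x : Y => ({x} : Set Y)

/-- A minimal (nontrivial) block system. -/
def IsMinimalBlockSystem (G : Subgroup (Equiv.Perm Y)) (P : Set (Set Y)) : Prop :=
  IsBlockSystem G P ∧ P ≠ SingletonPartition Y ∧
    ∀ Q : Set (Set Y), IsBlockSystem G Q → Refines Q P →
      Q = SingletonPartition Y ∨ Q = P

/-- `fix_G(P)`: elements of `G` stabilizing every block of `P` setwise. -/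
def FixBlocks (G : Subgroup (Equiv.Perm Y)) (P : Set (Set Y)) : Subgroup (Equiv.Perm Y) :=
  G ⊓ ⨅ B ∈ P, MulAction.stabilizer (Equiv.Perm Y) B

/-- The pointwise stabilizer of a set, inside the full symmetric group. -/
def PointStab (A : Set Y) : Subgroup (Equiv.Perm Y) :=
  ⨅ a ∈ A, MulAction.stabilizer (Equiv.Perm Y) a

/-- The support of a subgroup of `Equiv.Perm Y`. -/
def SubSupp (H : Subgroup (Equiv.Perm Y)) : Set Y :=
  {y | ∃ h ∈ H, h y ≠ y}

/-- `N` is a normal subgroup of the subgroup `H`. -/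
def NormalIn {G : Type*} [Group G] (H N : Subgroup G) : Prop :=
  N ≤ H ∧ ∀ h ∈ H, ∀ x ∈ N, h * x * h⁻¹ ∈ N

/-- `N` is a minimal normal subgroup of the subgroup `H`. -/
def MinimalNormalIn {G : Type*} [Group G] (H N : Subgroup G) : Prop :=
  NormalIn H N ∧ N ≠ ⊥ ∧ ∀ M : Subgroup G, NormalIn H M → M ≤ N → M = ⊥ ∨ M = N

/-- The socle of a subgroup `H`: the subgroup generated by the minimal
normal subgroups of `H`. -/
def SocleIn {G : Type*} [Group G] (H : Subgroup G) : Subgroup G :=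
  ⨆ N ∈ {N : Subgroup G | MinimalNormalIn H N}, N

/-- The conjugate subgroup `g⁻¹ H g`. -/
def ConjSub {G : Type*} [Group G] (g : G) (H : Subgroup G) : Subgroup G :=
  Subgroup.map (MulAut.conj g⁻¹).toMonoidHom H

/-- The permutation of an invariant set induced by an element of its setwise stabilizer. -/
def restrictHom {G Y : Type*} [Group G] [MulAction G Y] (A : Set Y) :
    MulAction.stabilizer G A →* Equiv.Perm A where
  toFun g := (MulAction.toPerm (g : G)).subtypePerm (fun y => by
    have hA : (g : G) • A = A := MulAction.mem_stabilizer_iff.mp g.2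
    constructor
    · intro hy
      have h1 : (g : G) • y ∈ A := hy
      have : (g : G) • y ∈ (g : G) • A := by rw [hA]; exact h1
      exact Set.smul_mem_smul_set_iff.mp this
    · intro hy
      have : (g : G) • y ∈ (g : G) • A := Set.smul_mem_smul_set hy
      rw [hA] at this
      exact this)
  map_one' := by
    ext x
    simp [Equiv.Perm.subtypePerm]
  map_mul' g h := by
    ext x
    simp [Equiv.Perm.subtypePerm, mul_smul]

/-- The permutation group induced on an invariant set `A` by (the setwise stabilizer of `A`
in) a subgroup `H`. -/
def InducedSub {G Y : Type*} [Group G] [MulAction G Y] (H : Subgroup G) (A : Set Y) :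
    Subgroup (Equiv.Perm A) :=
  Subgroup.map (restrictHom A) (H.comap (MulAction.stabilizer G A).subtype)

end PermGroupDefs

section ClassR

/-- The class `𝓡` of groups from Definition 1.7. -/
def IsClassRGroup (R : Type*) [Group R] : Prop :=
  ∃ n : ℕ, 0 < n ∧ Odd n ∧ Squarefree n ∧
    (Nonempty (R ≃* Multiplicative (ZMod n)) ∨
     Nonempty (R ≃* Multiplicative (ZMod n × ZMod 2)) ∨
     Nonempty (R ≃* Multiplicative (ZMod n × ZMod 2 × ZMod 2)) ∨
     Nonempty (R ≃* Multiplicative (ZMod n × ZMod 2 × ZMod 2 × ZMod 2)) ∨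
     Nonempty (R ≃* Multiplicative (ZMod n × ZMod 2 × ZMod 2 × ZMod 2 × ZMod 2)) ∨
     Nonempty (R ≃* Multiplicative (ZMod n × ZMod 4)) ∨
     Nonempty (R ≃* Multiplicative (ZMod n) × QuaternionGroup 2) ∨
     (∃ o : ℕ, (o = 2 ∨ o = 4 ∨ o = 8) ∧
       ∃ ψ : Multiplicative (ZMod o) →* MulAut (Multiplicative (ZMod n)),
         ψ (Multiplicative.ofAdd 1) ≠ 1 ∧ ψ (Multiplicative.ofAdd 1) ^ 2 = 1 ∧
         Nonempty (R ≃* Multiplicative (ZMod n) ⋊[ψ] Multiplicative (ZMod o))))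

end ClassR

section CI

/-- `σ` is an isomorphism between the ternary relational structures `R` and `S`. -/
def TernaryIso {X I : Type*} (R S : I → Set (X × X × X)) (σ : Equiv.Perm X) : Prop :=
  ∀ i, (fun t : X × X × X => (σ t.1, σ t.2.1, σ t.2.2)) '' R i = S i

/-- A ternary relational structure on a group `G` is a Cayley object if all left
translations are automorphisms. -/
def CayleyTernary (G : Type*) [Group G] {I : Type*} (R : I → Set (G × G × G)) : Prop :=
  ∀ g : G, TernaryIso R R (Equiv.mulLeft g)

/-- `G` is a CI-group with respect to ternary relational structures. -/
def IsTernaryCI (G : Type*) [Group G] : Prop :=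
  ∀ (I : Type) (R S : I → Set (G × G × G)), CayleyTernary G R → CayleyTernary G S →
    (∃ σ : Equiv.Perm G, TernaryIso R S σ) →
    ∃ φ : G ≃* G, TernaryIso R S φ.toEquiv

/-- `σ` is an isomorphism between the binary relational structures `R` and `S`. -/
def BinaryIso {X I : Type*} (R S : I → Set (X × X)) (σ : Equiv.Perm X) : Prop :=
  ∀ i, (fun t : X × X => (σ t.1, σ t.2)) '' R i = S i

/-- A binary relational structure on a group `G` is a Cayley object if all left
translations are automorphisms. -/
def CayleyBinary (G : Type*) [Group G] {I : Type*} (R : I → Set (G × G)) : Prop :=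
  ∀ g : G, BinaryIso R R (Equiv.mulLeft g)

/-- `G` is a CI-group with respect to binary relational structures. -/
def IsBinaryCI (G : Type*) [Group G] : Prop :=
  ∀ (I : Type) (R S : I → Set (G × G)), CayleyBinary G R → CayleyBinary G S →
    (∃ σ : Equiv.Perm G, BinaryIso R S σ) →
    ∃ φ : G ≃* G, BinaryIso R S φ.toEquiv

end CI

section Closure

/-- `σ` belongs to the `k`-closure of `G ≤ Sym(Y)`: it preserves every orbit of the
componentwise action of `G` on `Y^k`. -/
def InKClosure {Y : Type*} (k : ℕ) (G : Subgroup (Equiv.Perm Y)) (σ : Equiv.Perm Y) : Prop :=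
  ∀ t : Fin k → Y, ∃ g ∈ G, ∀ i, σ (t i) = g (t i)

/-- `G` is `k`-closed. -/
def IsKClosed {Y : Type*} (k : ℕ) (G : Subgroup (Equiv.Perm Y)) : Prop :=
  ∀ σ : Equiv.Perm Y, InKClosure k G σ → σ ∈ G

/-- The inner holomorph of `G`: the subgroup of `Sym(G)` generated by the left and right
regular representations. -/
def InnerHolomorph (G : Type*) [Group G] : Subgroup (Equiv.Perm G) :=
  Subgroup.closure
    ((Set.range fun g : G => Equiv.mulLeft g) ∪ (Set.range fun g : G => Equiv.mulRight g))

end Closure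
section Helpers

open Equiv

variable {X : Type*}

lemma mem_subOrbit_self (H : Subgroup (Equiv.Perm X)) (x : X) : x ∈ SubOrbit H x :=
  ⟨1, one_mem H, rfl⟩

lemma subOrbit_eq_of_mem {H : Subgroup (Equiv.Perm X)} {x y : X} (h : y ∈ SubOrbit H x) :
    SubOrbit H y = SubOrbit H x := by
  obtain ⟨g, hg, rfl⟩ := h
  ext z
  constructor
  · rintro ⟨k, hk, rfl⟩
    exact ⟨k * g, mul_mem hk hg, by simp [Equiv.Perm.mul_apply]⟩
  · rintro ⟨k, hk, rfl⟩
    exact ⟨k * g⁻¹, mul_mem hk (inv_mem hg), by simp [Equiv.Perm.mul_apply]⟩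

lemma subOrbit_mono {H K : Subgroup (Equiv.Perm X)} (h : H ≤ K) (x : X) :
    SubOrbit H x ⊆ SubOrbit K x := by
  rintro y ⟨g, hg, rfl⟩
  exact ⟨g, h hg, rfl⟩

lemma subOrbits_eq_of_forall {H K : Subgroup (Equiv.Perm X)}
    (h : ∀ x, SubOrbit H x = SubOrbit K x) : SubOrbits H = SubOrbits K :=
  congrArg Set.range (funext h)

lemma mem_conjSub {M : Type*} [Group M] {g k : M} {H : Subgroup M} :
    k ∈ ConjSub g H ↔ g * k * g⁻¹ ∈ H := by
  constructor
  · rintro ⟨h, hh, rfl⟩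
    have : g * ((MulAut.conj g⁻¹).toMonoidHom h) * g⁻¹ = h := by
      simp [MulAut.conj_apply, mul_assoc]
    rwa [this]
  · intro hk
    exact ⟨g * k * g⁻¹, hk, by simp [MulAut.conj_apply, mul_assoc]⟩

lemma map_conjSub {M N : Type*} [Group M] [Group N] (f : M →* N) (g : M) (H : Subgroup M) :
    Subgroup.map f (ConjSub g H) = ConjSub (f g) (Subgroup.map f H) := by
  ext y
  simp only [Subgroup.mem_map, mem_conjSub]
  constructor
  · rintro ⟨k, hk, rfl⟩
    exact ⟨g * k * g⁻¹, hk, by simp⟩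
  · rintro ⟨m, hm, hmeq⟩
    refine ⟨g⁻¹ * m * g, ?_, ?_⟩
    · have he : g * (g⁻¹ * m * g) * g⁻¹ = m := by group
      rw [he]; exact hm
    · have he : f (g⁻¹ * m * g) = (f g)⁻¹ * f m * f g := by simp
      rw [he, hmeq]; group

lemma subOrbit_conjSub (g : Equiv.Perm X) (H : Subgroup (Equiv.Perm X)) (x : X) :
    SubOrbit (ConjSub g H) x = ⇑g⁻¹ '' SubOrbit H (g x) := by
  ext z
  constructor
  · rintro ⟨k, hk, rfl⟩
    rw [mem_conjSub] at hk
    exact ⟨(g * k * g⁻¹) (g x), ⟨_, hk, rfl⟩, by simp [Equiv.Perm.mul_apply]⟩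
  · rintro ⟨y, ⟨h, hh, rfl⟩, rfl⟩
    exact ⟨g⁻¹ * h * g, mem_conjSub.mpr (by simpa [mul_assoc] using hh),
      by simp [Equiv.Perm.mul_apply]⟩

lemma subOrbits_conjSub (g : Equiv.Perm X) (H : Subgroup (Equiv.Perm X)) :
    SubOrbits (ConjSub g H) = (fun s => ⇑g⁻¹ '' s) '' SubOrbits H := by
  ext s
  constructor
  · rintro ⟨x, rfl⟩
    exact ⟨SubOrbit H (g x), ⟨g x, rfl⟩, (subOrbit_conjSub g H x).symm⟩
  · rintro ⟨t, ⟨x, rfl⟩, rfl⟩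
    exact ⟨g⁻¹ x, by rw [subOrbit_conjSub]; simp⟩

lemma ncard_subOrbits_conjSub [Finite X] (g : Equiv.Perm X) (H : Subgroup (Equiv.Perm X)) :
    (SubOrbits (ConjSub g H)).ncard = (SubOrbits H).ncard := by
  rw [subOrbits_conjSub]
  exact Set.ncard_image_of_injective _ (Set.image_injective.mpr (g⁻¹).injective)

lemma subOrbit_eq_of_le_of_ncard_eq [Finite X] {H L : Subgroup (Equiv.Perm X)} (hHL : H ≤ L)
    (hcard : (SubOrbits L).ncard = (SubOrbits H).ncard) (x : X) :
    SubOrbit H x = SubOrbit L x := by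
  classical
  let f : ↥(SubOrbits H) → ↥(SubOrbits L) := fun O => ⟨SubOrbit L O.2.choose, ⟨_, rfl⟩⟩
  have key : ∀ (O : ↥(SubOrbits H)) (y : X), y ∈ (O : Set X) → (f O : Set X) = SubOrbit L y := by
    intro O y hy
    have hspec : SubOrbit H O.2.choose = (O : Set X) := O.2.choose_spec
    have hy2 : y ∈ SubOrbit H O.2.choose := by rw [hspec]; exact hy
    have : y ∈ SubOrbit L O.2.choose := subOrbit_mono hHL _ hy2
    exact (subOrbit_eq_of_mem this).symm
  have hsurj : Function.Surjective f := by
    rintro ⟨C, ⟨y, rfl⟩⟩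
    refine ⟨⟨SubOrbit H y, ⟨y, rfl⟩⟩, Subtype.ext ?_⟩
    exact key _ y (mem_subOrbit_self H y)
  have hcards : Nat.card ↥(SubOrbits H) = Nat.card ↥(SubOrbits L) := by
    rw [Nat.card_coe_set_eq, Nat.card_coe_set_eq, hcard]
  have hbij : Function.Bijective f :=
    (Nat.bijective_iff_surjective_and_card f).mpr ⟨hsurj, hcards⟩
  refine subset_antisymm (subOrbit_mono hHL x) ?_
  intro z hz
  have ha : (f ⟨SubOrbit H x, ⟨x, rfl⟩⟩ : Set X) = SubOrbit L x :=
    key _ x (mem_subOrbit_self H x)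
  have hb : (f ⟨SubOrbit H z, ⟨z, rfl⟩⟩ : Set X) = SubOrbit L x := by
    rw [key _ z (mem_subOrbit_self H z)]
    exact subOrbit_eq_of_mem hz
  have := hbij.1 (Subtype.ext (ha.trans hb.symm) :
    f ⟨SubOrbit H x, ⟨x, rfl⟩⟩ = f ⟨SubOrbit H z, ⟨z, rfl⟩⟩)
  have hxz : SubOrbit H x = SubOrbit H z := congrArg Subtype.val this
  rw [hxz]
  exact mem_subOrbit_self H z

end Helpers
section Helpers2

open Equiv Pointwise

variable {X : Type*}

lemma perm_smul_set (g : Equiv.Perm X) (B : Set X) : g • B = ⇑g '' B := by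
  ext y
  constructor
  · rintro ⟨w, hw, rfl⟩
    exact ⟨w, hw, rfl⟩
  · rintro ⟨w, hw, rfl⟩
    exact ⟨w, hw, rfl⟩

lemma finite_sylow (G : Type*) [Group G] [Finite G] (p : ℕ) : Finite (Sylow p G) :=
  Finite.of_injective (fun P : Sylow p G => ((P : Subgroup G) : Set G))
    (fun _ _ h => Sylow.ext (SetLike.coe_injective h))

lemma mem_inducedSub {A : Set X} {H : Subgroup (Equiv.Perm X)} {π : Equiv.Perm A} :
    π ∈ InducedSub H A ↔
      ∃ g : MulAction.stabilizer (Equiv.Perm X) A, (g : Equiv.Perm X) ∈ H ∧ restrictHom A g = π := by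
  simp only [InducedSub, Subgroup.mem_map, Subgroup.mem_comap, Subgroup.coe_subtype]

lemma inducedSub_mono {H K : Subgroup (Equiv.Perm X)} (A : Set X) (h : H ≤ K) :
    InducedSub H A ≤ InducedSub K A :=
  Subgroup.map_mono (Subgroup.comap_mono h)

lemma restrictHom_apply_coe (A : Set X) (g : MulAction.stabilizer (Equiv.Perm X) A) (z : A) :
    ((restrictHom A g z : A) : X) = (g : Equiv.Perm X) z := rfl

lemma subOrbit_inducedSub {H : Subgroup (Equiv.Perm X)} {A : Set X}
    (hH : H ≤ MulAction.stabilizer (Equiv.Perm X) A) (x : A) :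
    Subtype.val '' SubOrbit (InducedSub H A) x = SubOrbit H ↑x := by
  ext y
  constructor
  · rintro ⟨z, ⟨π, hπ, rfl⟩, rfl⟩
    obtain ⟨g, hgH, rfl⟩ := mem_inducedSub.mp hπ
    exact ⟨↑g, hgH, rfl⟩
  · rintro ⟨h, hh, rfl⟩
    exact ⟨restrictHom A ⟨h, hH hh⟩ x,
      ⟨restrictHom A ⟨h, hH hh⟩, mem_inducedSub.mpr ⟨⟨h, hH hh⟩, hh, rfl⟩, rfl⟩, rfl⟩

lemma inducedSub_isPGroup {p : ℕ} {H : Subgroup (Equiv.Perm X)} (hH : IsPGroup p ↥H)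
    (A : Set X) : IsPGroup p ↥(InducedSub H A) :=
  (hH.comap_of_injective (MulAction.stabilizer (Equiv.Perm X) A).subtype
    Subtype.coe_injective).map _

lemma inducedSub_conjSub {A : Set X} {g : Equiv.Perm X}
    (hg : g ∈ MulAction.stabilizer (Equiv.Perm X) A) (H : Subgroup (Equiv.Perm X)) :
    InducedSub (ConjSub g H) A = ConjSub (restrictHom A ⟨g, hg⟩) (InducedSub H A) := by
  have hc : Subgroup.comap (MulAction.stabilizer (Equiv.Perm X) A).subtype (ConjSub g H) =
      ConjSub (⟨g, hg⟩ : MulAction.stabilizer (Equiv.Perm X) A)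
        (Subgroup.comap (MulAction.stabilizer (Equiv.Perm X) A).subtype H) := by
    ext k
    rw [Subgroup.mem_comap, mem_conjSub, mem_conjSub, Subgroup.mem_comap]
    simp
  show Subgroup.map _ _ = _
  rw [hc, map_conjSub]
  rfl

lemma ncard_subOrbit_of_semiregular [Finite X] {H : Subgroup (Equiv.Perm X)}
    (hH : SubSemiregular H) (x : X) : (SubOrbit H x).ncard = Nat.card ↥H := by
  have hr : SubOrbit H x = Set.range (fun h : ↥H => (h : Equiv.Perm X) x) := by
    ext y
    exact ⟨fun ⟨h, hh, e⟩ => ⟨⟨h, hh⟩, e⟩, fun ⟨h, e⟩ => ⟨↑h, h.2, e⟩⟩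
  have hinj : Function.Injective (fun h : ↥H => (h : Equiv.Perm X) x) := by
    intro a b hab
    have hab2 : (a : Equiv.Perm X) x = (b : Equiv.Perm X) x := hab
    have hfix : ((b : Equiv.Perm X)⁻¹ * (a : Equiv.Perm X)) x = x := by
      simp only [Equiv.Perm.mul_apply]
      rw [hab2]
      exact Equiv.symm_apply_apply _ _
    have h1 := hH _ (mul_mem (inv_mem b.2) a.2) ⟨x, hfix⟩
    exact Subtype.ext (inv_mul_eq_one.mp h1).symm
  rw [hr, ← Nat.card_coe_set_eq]
  exact (Nat.card_congr (Equiv.ofInjective _ hinj)).symm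

lemma image_subOrbit_of_normalIn {G N : Subgroup (Equiv.Perm X)} (h : NormalIn G N)
    {g : Equiv.Perm X} (hg : g ∈ G) (x : X) :
    ⇑g '' SubOrbit N x = SubOrbit N (g x) := by
  ext z
  constructor
  · rintro ⟨-, ⟨n, hn, rfl⟩, rfl⟩
    exact ⟨g * n * g⁻¹, h.2 g hg n hn, by simp [Equiv.Perm.mul_apply]⟩
  · rintro ⟨n, hn, rfl⟩
    refine ⟨(g⁻¹ * n * g) x, ⟨g⁻¹ * n * g, ?_, rfl⟩, by simp [Equiv.Perm.mul_apply]⟩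
    have := h.2 g⁻¹ (inv_mem hg) n hn
    simpa using this

def movesOrbits (N : Subgroup (Equiv.Perm X)) : Subgroup (Equiv.Perm X) where
  carrier := {g | ∀ x, ⇑g '' SubOrbit N x = SubOrbit N (g x)}
  one_mem' := by intro x; simp
  mul_mem' := by
    intro a b ha hb x
    have hco : ⇑(a * b) = ⇑a ∘ ⇑b := rfl
    rw [hco, Set.image_comp, hb x, ha (b x)]
    rfl
  inv_mem' := by
    intro a ha x
    have h1 := ha (a⁻¹ x)
    rw [show a (a⁻¹ x) = x from Equiv.apply_symm_apply a x] at h1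
    rw [← h1, ← Set.image_comp]
    have : ⇑a⁻¹ ∘ ⇑a = id := by
      funext y; simp
    rw [this, Set.image_id]

lemma mem_movesOrbits {N : Subgroup (Equiv.Perm X)} {g : Equiv.Perm X} :
    g ∈ movesOrbits N ↔ ∀ x, ⇑g '' SubOrbit N x = SubOrbit N (g x) := Iff.rfl

end Helpers2
section Helpers3

open Equiv Pointwise

lemma sylow_orbit_lemma {Z : Type*} [Finite Z] {p : ℕ} (hp : p.Prime)
    (F' H K : Subgroup (Equiv.Perm Z)) (hHK : H ≤ K) (hKF : K ≤ F')
    (hK : IsPGroup p ↥K) (S0 : Sylow p ↥F')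
    (hH : SubOrbits H = SubOrbits (Subgroup.map F'.subtype (S0 : Subgroup ↥F')))
    (z : Z) : SubOrbit H z = SubOrbit K z := by
  haveI := Fact.mk hp
  haveI : Finite (Sylow p ↥F') := finite_sylow ↥F' p
  obtain ⟨S, hS⟩ := (hK.comap_of_injective F'.subtype Subtype.coe_injective).exists_le_sylow
  obtain ⟨c, hc⟩ := MulAction.exists_smul_eq (↥F') S0 S
  set mS := Subgroup.map F'.subtype (S : Subgroup ↥F') with hmS
  have hKmS : K ≤ mS := by
    intro k hk
    exact ⟨⟨k, hKF hk⟩, hS (by simpa [Subgroup.mem_comap]), rfl⟩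
  have hHmS : H ≤ mS := hHK.trans hKmS
  have hcard : (SubOrbits mS).ncard = (SubOrbits H).ncard := by
    have h2 : (S : Subgroup ↥F') = ConjSub c⁻¹ (S0 : Subgroup ↥F') := by
      rw [← hc]
      ext u
      rw [mem_conjSub, Sylow.coe_subgroup_smul, Subgroup.mem_pointwise_smul_iff_inv_smul_mem]
      rw [MulAut.smul_def, MulAut.conj_inv_apply]
      simp [mul_assoc]
    have h1 : mS = ConjSub ((c⁻¹ : ↥F') : Equiv.Perm Z)
        (Subgroup.map F'.subtype (S0 : Subgroup ↥F')) := by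
      rw [hmS, h2, map_conjSub]
      rfl
    rw [h1, ncard_subOrbits_conjSub, ← hH]
  have key : ∀ x, SubOrbit H x = SubOrbit mS x :=
    fun x => subOrbit_eq_of_le_of_ncard_eq hHmS hcard x
  refine subset_antisymm (subOrbit_mono hHK z) ?_
  exact (subOrbit_mono hKmS z).trans (key z).symm.subset

lemma subOrbit_eq_of_induced {X : Type*} {H K : Subgroup (Equiv.Perm X)} {A : Set X}
    (hH : H ≤ MulAction.stabilizer (Equiv.Perm X) A)
    (hK : K ≤ MulAction.stabilizer (Equiv.Perm X) A) {x : X} (hx : x ∈ A)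
    (h : ∀ z : A, SubOrbit (InducedSub H A) z = SubOrbit (InducedSub K A) z) :
    SubOrbit H x = SubOrbit K x := by
  have h2 := congrArg (Set.image Subtype.val) (h ⟨x, hx⟩)
  rwa [subOrbit_inducedSub hH, subOrbit_inducedSub hK] at h2

end Helpers3
/-- Lemma 4.5. -/
theorem statement7 {X : Type*} [Finite X] (p : ℕ) (hp : p.Prime)
    (R T : Subgroup (Equiv.Perm X)) (hiso : Nonempty (↥R ≃* ↥T))
    (hRtrans : SubTrans R) (hTtrans : SubTrans T)
    (Rp Tp : Subgroup (Equiv.Perm X))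
    (hRpnormal : NormalIn R Rp) (hRpp : IsPGroup p ↥Rp) (hRpsemi : SubSemiregular Rp)
    (hTpnormal : NormalIn T Tp) (hTpp : IsPGroup p ↥Tp) (hTpsemi : SubSemiregular Tp)
    (𝓑 : Set (Set X)) (h𝓑 : IsBlockSystem (R ⊔ T) 𝓑)
    (hRfix : Rp ≤ FixBlocks (R ⊔ T) 𝓑) (hTfix : Tp ≤ FixBlocks (R ⊔ T) 𝓑)
    (horbR : ∀ B ∈ 𝓑, ∃ P : Sylow p ↥(InducedSub (FixBlocks (R ⊔ T) 𝓑) B),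
      SubOrbits (InducedSub Rp B) =
        SubOrbits (Subgroup.map (InducedSub (FixBlocks (R ⊔ T) 𝓑) B).subtype
          (P : Subgroup ↥(InducedSub (FixBlocks (R ⊔ T) 𝓑) B))))
    (horbT : ∀ B ∈ 𝓑, ∃ P : Sylow p ↥(InducedSub (FixBlocks (R ⊔ T) 𝓑) B),
      SubOrbits (InducedSub Tp B) =
        SubOrbits (Subgroup.map (InducedSub (FixBlocks (R ⊔ T) 𝓑) B).subtype
          (P : Subgroup ↥(InducedSub (FixBlocks (R ⊔ T) 𝓑) B)))) :
    ∃ δ ∈ (R ⊔ T : Subgroup (Equiv.Perm X)),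
      SubOrbits Rp = SubOrbits (ConjSub δ Tp) ∧
      IsNormalBlockSystem (R ⊔ ConjSub δ T) (SubOrbits Rp) ∧
      ∀ C ∈ SubOrbits Rp, C.ncard = Nat.card ↥Rp := by
  classical
  haveI := Fact.mk hp
  set F : Subgroup (Equiv.Perm X) := FixBlocks (R ⊔ T) 𝓑 with hF
  have hFle : F ≤ R ⊔ T := inf_le_left
  have hFstab : ∀ B ∈ 𝓑, F ≤ MulAction.stabilizer (Equiv.Perm X) B := by
    intro B hB
    calc F ≤ ⨅ B ∈ 𝓑, MulAction.stabilizer (Equiv.Perm X) B := inf_le_right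
    _ ≤ MulAction.stabilizer (Equiv.Perm X) B := iInf₂_le B hB
  haveI : Finite (Sylow p ↥F) := finite_sylow ↥F p
  -- Sylow setup in F
  obtain ⟨P', hP'⟩ := (hRpp.comap_of_injective F.subtype Subtype.coe_injective).exists_le_sylow
  obtain ⟨Q', hQ'⟩ := (hTpp.comap_of_injective F.subtype Subtype.coe_injective).exists_le_sylow
  obtain ⟨g, hg⟩ := MulAction.exists_smul_eq (↥F) Q' P'
  set δ : Equiv.Perm X := ((g⁻¹ : ↥F) : Equiv.Perm X) with hδ
  have hδF : δ ∈ F := (g⁻¹ : ↥F).2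
  set Pg : Subgroup (Equiv.Perm X) := Subgroup.map F.subtype (P' : Subgroup ↥F) with hPg
  have hPgF : Pg ≤ F := Subgroup.map_subtype_le _
  have hPgp : IsPGroup p ↥Pg := P'.isPGroup'.map F.subtype
  have hRpPg : Rp ≤ Pg := by
    intro r hr
    exact ⟨⟨r, hRfix hr⟩, hP' (by simpa [Subgroup.mem_comap, Subgroup.mem_subgroupOf] using hr), rfl⟩
  have hTp'Pg : ConjSub δ Tp ≤ Pg := by
    intro k hk
    rw [mem_conjSub] at hk
    set t' : ↥F := ⟨δ * k * δ⁻¹, hTfix hk⟩ with ht'def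
    have ht' : t' ∈ (Q' : Subgroup ↥F) := hQ' (by simpa [Subgroup.mem_comap, Subgroup.mem_subgroupOf, ht'def] using hk)
    have he : g * t' * g⁻¹ ∈ (P' : Subgroup ↥F) := by
      have h1 := Subgroup.smul_mem_pointwise_smul t' (MulAut.conj g) (Q' : Subgroup ↥F) ht'
      rw [← Sylow.coe_subgroup_smul, hg] at h1
      simpa [MulAut.smul_def, MulAut.conj_apply] using h1
    refine ⟨g * t' * g⁻¹, he, ?_⟩
    have hcoe : ((g * t' * g⁻¹ : ↥F) : Equiv.Perm X)
        = δ⁻¹ * (δ * k * δ⁻¹) * δ := by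
      simp [ht'def, hδ, mul_assoc]
    show ((g * t' * g⁻¹ : ↥F) : Equiv.Perm X) = k
    rw [hcoe]
    group
  have hTp'F : ConjSub δ Tp ≤ F := hTp'Pg.trans hPgF
  -- Pointwise orbit equality
  have heq : ∀ x, SubOrbit Rp x = SubOrbit (ConjSub δ Tp) x := by
    intro x
    obtain ⟨B, ⟨hB, hxB⟩, -⟩ := h𝓑.2.1 x
    have hstabB := hFstab B hB
    have hRpB : Rp ≤ MulAction.stabilizer (Equiv.Perm X) B := (hRfix.trans hstabB)
    have hTp'B : ConjSub δ Tp ≤ MulAction.stabilizer (Equiv.Perm X) B := hTp'F.trans hstabB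
    have hPgB : Pg ≤ MulAction.stabilizer (Equiv.Perm X) B := hPgF.trans hstabB
    refine subOrbit_eq_of_induced hRpB hTp'B hxB ?_
    intro z
    obtain ⟨PB, hPB⟩ := horbR B hB
    obtain ⟨QB, hQB⟩ := horbT B hB
    haveI : Finite (Sylow p ↥(InducedSub F B)) := finite_sylow _ p
    have hIndPgF : InducedSub Pg B ≤ InducedSub F B := inducedSub_mono B hPgF
    have hR := sylow_orbit_lemma hp (InducedSub F B) (InducedSub Rp B) (InducedSub Pg B)
      (inducedSub_mono B hRpPg) hIndPgF (inducedSub_isPGroup hPgp B) PB hPB z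
    -- the T side
    have hδstab : δ ∈ MulAction.stabilizer (Equiv.Perm X) B := hstabB hδF
    set d : Equiv.Perm ↥B := restrictHom B ⟨δ, hδstab⟩ with hd
    have hdF' : d ∈ InducedSub F B := mem_inducedSub.mpr ⟨⟨δ, hδstab⟩, hδF, rfl⟩
    set d' : ↥(InducedSub F B) := ⟨d, hdF'⟩ with hd'
    have hconjsyl : ((d'⁻¹ • QB : Sylow p ↥(InducedSub F B)) : Subgroup ↥(InducedSub F B))
        = ConjSub d' (QB : Subgroup ↥(InducedSub F B)) := by
      ext u
      rw [mem_conjSub, Sylow.coe_subgroup_smul, Subgroup.mem_pointwise_smul_iff_inv_smul_mem]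
      rw [MulAut.smul_def, MulAut.conj_inv_apply]
      simp [mul_assoc]
    have hT2 : SubOrbits (InducedSub (ConjSub δ Tp) B)
        = SubOrbits (Subgroup.map (InducedSub F B).subtype
            ((d'⁻¹ • QB : Sylow p ↥(InducedSub F B)) : Subgroup ↥(InducedSub F B))) := by
      rw [inducedSub_conjSub hδstab Tp, ← hd, subOrbits_conjSub, hQB, hconjsyl, map_conjSub]
      rw [← subOrbits_conjSub]
      rfl
    have hT := sylow_orbit_lemma hp (InducedSub F B) (InducedSub (ConjSub δ Tp) B)
      (InducedSub Pg B) (inducedSub_mono B hTp'Pg) hIndPgF (inducedSub_isPGroup hPgp B)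
      (d'⁻¹ • QB) hT2 z
    rw [hR, hT]
  have hOrbEq : SubOrbits Rp = SubOrbits (ConjSub δ Tp) := subOrbits_eq_of_forall heq
  -- normality of conjugated pieces
  have hTp'norm : NormalIn (ConjSub δ T) (ConjSub δ Tp) := by
    refine ⟨Subgroup.map_mono hTpnormal.1, ?_⟩
    intro h hh n hn
    rw [mem_conjSub] at hh hn ⊢
    have := hTpnormal.2 _ hh _ hn
    have hrw : δ * (h * n * h⁻¹) * δ⁻¹
        = (δ * h * δ⁻¹) * (δ * n * δ⁻¹) * (δ * h * δ⁻¹)⁻¹ := by group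
    rwa [hrw]
  -- every element of R ⊔ ConjSub δ T permutes the Rp-orbits
  have hmoves : R ⊔ ConjSub δ T ≤ movesOrbits Rp := by
    refine sup_le ?_ ?_
    · intro r hr
      rw [mem_movesOrbits]
      intro x
      exact image_subOrbit_of_normalIn hRpnormal hr x
    · intro t ht
      rw [mem_movesOrbits]
      intro x
      rw [heq x, heq (t x)]
      exact image_subOrbit_of_normalIn hTp'norm ht x
  have hmoves' : ∀ g ∈ (R ⊔ ConjSub δ T : Subgroup (Equiv.Perm X)), ∀ x,
      ⇑g '' SubOrbit Rp x = SubOrbit Rp (g x) := fun g hg => mem_movesOrbits.mp (hmoves hg)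
  -- block system
  have hBS : IsBlockSystem (R ⊔ ConjSub δ T) (SubOrbits Rp) := by
    refine ⟨?_, ?_, ?_⟩
    · rintro C ⟨x, rfl⟩
      exact ⟨x, mem_subOrbit_self Rp x⟩
    · intro x
      refine ⟨SubOrbit Rp x, ⟨⟨x, rfl⟩, mem_subOrbit_self Rp x⟩, ?_⟩
      rintro C ⟨⟨y, rfl⟩, hxC⟩
      exact (subOrbit_eq_of_mem hxC).symm
    · intro g hg C hC
      obtain ⟨y, rfl⟩ := hC
      exact ⟨g y, (hmoves' g hg y).symm⟩
  -- the normal subgroup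
  set N : Subgroup (Equiv.Perm X) := FixBlocks (R ⊔ ConjSub δ T) (SubOrbits Rp) with hN
  have hmemN : ∀ {n : Equiv.Perm X}, n ∈ N ↔
      n ∈ (R ⊔ ConjSub δ T : Subgroup (Equiv.Perm X)) ∧
        ∀ C ∈ SubOrbits Rp, ⇑n '' C = C := by
    intro n
    rw [hN]
    show n ∈ _ ⊓ _ ↔ _
    rw [Subgroup.mem_inf]
    refine and_congr_right fun _ => ?_
    rw [Subgroup.mem_iInf]
    constructor
    · intro h C hC
      have := Subgroup.mem_iInf.mp (h C) hC
      rw [MulAction.mem_stabilizer_iff, perm_smul_set] at this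
      exact this
    · intro h C
      rw [Subgroup.mem_iInf]
      intro hC
      rw [MulAction.mem_stabilizer_iff, perm_smul_set]
      exact h C hC
  have hRpN : Rp ≤ N := by
    intro r hr
    rw [hmemN]
    refine ⟨(le_sup_left (α := Subgroup (Equiv.Perm X))) (hRpnormal.1 hr), ?_⟩
    rintro C ⟨y, rfl⟩
    have hself : NormalIn Rp Rp :=
      ⟨le_refl _, fun h hh x hx => mul_mem (mul_mem hh hx) (inv_mem hh)⟩
    rw [image_subOrbit_of_normalIn hself hr y]
    exact subOrbit_eq_of_mem ⟨r, hr, rfl⟩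
  have hNorbit : ∀ x, SubOrbit N x = SubOrbit Rp x := by
    intro x
    refine subset_antisymm ?_ (subOrbit_mono hRpN x)
    rintro y ⟨n, hn, rfl⟩
    have h2 := (hmemN.mp hn).2 (SubOrbit Rp x) ⟨x, rfl⟩
    rw [← h2]
    exact Set.mem_image_of_mem _ (mem_subOrbit_self Rp x)
  have hNnorm : ∀ g ∈ (R ⊔ ConjSub δ T : Subgroup (Equiv.Perm X)), ∀ n ∈ N,
      g * n * g⁻¹ ∈ N := by
    intro g hg n hn
    obtain ⟨hnG, hnfix⟩ := hmemN.mp hn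
    rw [hmemN]
    refine ⟨mul_mem (mul_mem hg hnG) (inv_mem hg), ?_⟩
    rintro C ⟨y, rfl⟩
    have hco : ⇑(g * n * g⁻¹) = ⇑g ∘ ⇑n ∘ ⇑g⁻¹ := rfl
    rw [hco, Set.image_comp, Set.image_comp]
    rw [hmoves' g⁻¹ (inv_mem hg) y]
    rw [hnfix (SubOrbit Rp (g⁻¹ y)) ⟨g⁻¹ y, rfl⟩]
    rw [hmoves' g hg (g⁻¹ y)]
    rw [show g (g⁻¹ y) = y from Equiv.apply_symm_apply g y]
  refine ⟨δ, hFle hδF, hOrbEq, ⟨hBS, N, by rw [hN]; exact inf_le_left, hNnorm, ?_⟩, ?_⟩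
  · exact subOrbits_eq_of_forall fun x => (hNorbit x).symm
  · rintro C ⟨x, rfl⟩
    exact ncard_subOrbit_of_semiregular hRpsemi x
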